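/- Let k ≥ 1 with r_n(k) < n, and suppose ĝ_k ∈ ℂ^N satisfies p_j^H (A ĝ_k) = 0 for all 1 ≤ j ≤ k. Then for any complex parameters ω_1, …, ω_{g_n(k+1)}, the ML(n)BiCGStab direction vector g_k := φ_{g_n(k+1)}(A) ĝ_k satisfies q_i^H (A g_k) = 0 for all 1 ≤ i ≤ r_n(k), i.e. A g_k ⟂ span{q_1, …, q_{r_n(k)}}. -/
import Mathlib


open Matrix Polynomial

/-- The index function `g_n(k) = ⌊(k-1)/n⌋`, rounding toward minus infinity. -/
def gIdx (n k : ℤ) : ℤ := Int.fdiv (k - 1) n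

/-- The index function `r_n(k) = k - n * g_n(k)`. -/
def rIdx (n k : ℤ) : ℤ := k - n * gIdx n k

lemma gIdx_of_block (n t i : ℤ) (hn : 0 < n) (hi1 : 1 ≤ i) (hin : i ≤ n)
    (ht : 0 ≤ t) : gIdx n (n * t + i) = t := by
  unfold gIdx
  rw [Int.fdiv_eq_ediv_of_nonneg _ hn.le]
  have h : n * t + i - 1 = (i - 1) + n * t := by ring
  rw [h, Int.add_mul_ediv_left _ _ hn.ne',
    Int.ediv_eq_zero_of_lt (by omega) (by omega), zero_add]

lemma rIdx_of_block (n t i : ℤ) (hn : 0 < n) (hi1 : 1 ≤ i) (hin : i ≤ n)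
    (ht : 0 ≤ t) : rIdx n (n * t + i) = i := by
  unfold rIdx
  rw [gIdx_of_block n t i hn hi1 hin ht]; ring

lemma rIdx_bounds (n k : ℤ) (hn : 0 < n) : 1 ≤ rIdx n k ∧ rIdx n k ≤ n := by
  unfold rIdx gIdx
  rw [Int.fdiv_eq_ediv_of_nonneg _ hn.le]
  have h1 := Int.emod_nonneg (k - 1) hn.ne'
  have h2 := Int.emod_lt_of_pos (k - 1) hn
  have h3 := Int.mul_ediv_add_emod (k - 1) n
  omega

lemma gIdx_nonneg (n k : ℤ) (hn : 0 < n) (hk : 1 ≤ k) : 0 ≤ gIdx n k := by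
  unfold gIdx
  rw [Int.fdiv_eq_ediv_of_nonneg _ hn.le]
  exact Int.ediv_nonneg (by omega) hn.le

lemma natDegree_phi (ω : ℕ → ℂ) (φ : ℕ → Polynomial ℂ)
    (hφ0 : φ 0 = 1)
    (hφ : ∀ m : ℕ, φ (m + 1) = (1 - C (ω (m + 1)) * X) * φ m) :
    ∀ m, (φ m).natDegree ≤ m := by
  intro m
  induction m with
  | zero => simp [hφ0]
  | succ m ih =>
    rw [hφ m]
    refine le_trans natDegree_mul_le ?_
    have h1 : (1 - C (ω (m + 1)) * X : Polynomial ℂ).natDegree ≤ 1 := by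
      refine le_trans (natDegree_sub_le _ _) ?_
      simp only [natDegree_one, max_le_iff]
      exact ⟨Nat.zero_le _, le_trans (natDegree_C_mul_le _ _) (by simp)⟩
    omega

lemma sum_mulVec {N : ℕ} {ι : Type*} (s : Finset ι) (f : ι → Matrix (Fin N) (Fin N) ℂ)
    (v : Fin N → ℂ) : (∑ x ∈ s, f x) *ᵥ v = ∑ x ∈ s, (f x *ᵥ v) :=
  map_sum (Matrix.mulVec.addMonoidHomLeft v) f s

/-- Let `k ≥ 1` with `r_n(k) < n`, and suppose `ĝ_k` satisfies `p_jᴴ (A ĝ_k) = 0` for all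
`1 ≤ j ≤ k`, where `p_j = (Aᴴ)^{g_n(j)} q_{r_n(j)}`.  Then for any parameters
`ω_1, …, ω_{g_n(k+1)}`, the ML(n)BiCGStab direction vector `g_k := φ_{g_n(k+1)}(A) ĝ_k`
satisfies `q_iᴴ (A g_k) = 0` for all `1 ≤ i ≤ r_n(k)`, where `φ_0 = 1` and
`φ_m(λ) = (1 − ω_m λ) φ_{m−1}(λ)`. -/
theorem stmt_13 {N : ℕ} (A : Matrix (Fin N) (Fin N) ℂ) (n : ℤ) (hn : 0 < n)
    (q : ℤ → (Fin N → ℂ)) (p : ℤ → (Fin N → ℂ))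
    (hp : ∀ k : ℤ, 1 ≤ k → p k = (Aᴴ ^ (gIdx n k).toNat) *ᵥ q (rIdx n k))
    (ω : ℕ → ℂ) (φ : ℕ → Polynomial ℂ)
    (hφ0 : φ 0 = 1)
    (hφ : ∀ m : ℕ, φ (m + 1) = (1 - C (ω (m + 1)) * X) * φ m)
    (k : ℤ) (hk : 1 ≤ k) (hkn : rIdx n k < n)
    (ghat : Fin N → ℂ)
    (hv : ∀ j : ℤ, 1 ≤ j → j ≤ k → star (p j) ⬝ᵥ (A *ᵥ ghat) = 0) :
    ∀ i : ℤ, 1 ≤ i → i ≤ rIdx n k →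
      star (q i) ⬝ᵥ (A *ᵥ ((aeval A (φ (gIdx n (k + 1)).toNat)) *ᵥ ghat)) = 0 := by
  intro i hi1 hi2
  set g := gIdx n k with hg
  have hg0 : 0 ≤ g := gIdx_nonneg n k hn hk
  have hrk : k = n * g + rIdx n k := by unfold rIdx; ring
  have hr1 : 1 ≤ rIdx n k := (rIdx_bounds n k hn).1
  -- g_n(k+1) = g_n(k)
  have hgk1 : gIdx n (k + 1) = g := by
    have h : k + 1 = n * g + (rIdx n k + 1) := by omega
    rw [h, gIdx_of_block n g (rIdx n k + 1) hn (by omega) (by omega) hg0]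
  rw [hgk1]
  -- key power fact
  have key : ∀ t : ℕ, (t : ℤ) ≤ g →
      star (q i) ⬝ᵥ (A ^ t *ᵥ (A *ᵥ ghat)) = 0 := by
    intro t ht
    have hj1 : (1 : ℤ) ≤ n * t + i := by
      have : (0 : ℤ) ≤ n * t := by positivity
      omega
    have hj2 : n * (t : ℤ) + i ≤ k := by
      have : n * (t : ℤ) ≤ n * g := mul_le_mul_of_nonneg_left ht hn.le
      omega
    have h0 := hv (n * t + i) hj1 hj2
    rw [hp _ hj1, gIdx_of_block n t i hn hi1 (by omega) (by positivity),
      rIdx_of_block n t i hn hi1 (by omega) (by positivity)] at h0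
    simp only [Int.toNat_natCast] at h0
    rwa [Matrix.star_mulVec, ← Matrix.dotProduct_mulVec,
      Matrix.mulVec_mulVec, Matrix.conjTranspose_pow, Matrix.conjTranspose_conjTranspose,
      ← Matrix.mulVec_mulVec] at h0
  -- polynomial fact
  have poly : ∀ P : Polynomial ℂ, P.natDegree ≤ g.toNat →
      star (q i) ⬝ᵥ ((aeval A P) *ᵥ (A *ᵥ ghat)) = 0 := by
    intro P hP
    rw [aeval_eq_sum_range, sum_mulVec]
    rw [show star (q i) ⬝ᵥ (∑ x ∈ Finset.range (P.natDegree + 1),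
        (P.coeff x • A ^ x) *ᵥ (A *ᵥ ghat))
        = ∑ x ∈ Finset.range (P.natDegree + 1),
          star (q i) ⬝ᵥ ((P.coeff x • A ^ x) *ᵥ (A *ᵥ ghat)) by
      simp only [dotProduct, Finset.sum_apply, Finset.mul_sum]
      exact Finset.sum_comm]
    refine Finset.sum_eq_zero fun t htmem => ?_
    rw [Matrix.smul_mulVec, dotProduct_smul]
    have ht : (t : ℤ) ≤ g := by
      have := Finset.mem_range.mp htmem
      omega
    rw [key t ht, smul_zero]
  -- commute A with aeval A P
  have hcomm : A *ᵥ ((aeval A (φ g.toNat)) *ᵥ ghat)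
      = (aeval A (φ g.toNat)) *ᵥ (A *ᵥ ghat) := by
    have hAc : A * aeval A (φ g.toNat) = aeval A (φ g.toNat) * A := by
      have h1 : aeval A (X * φ g.toNat) = aeval A (φ g.toNat * X) := by rw [mul_comm]
      simpa only [_root_.map_mul, aeval_X] using h1
    rw [Matrix.mulVec_mulVec, Matrix.mulVec_mulVec, hAc]
  rw [hcomm]
  exact poly _ (natDegree_phi ω φ hφ0 hφ _)
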